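/- arXiv:1207.6782 — 3 statements merged into one kernel-verified Lean document; each statement's English description precedes it below -/
import Mathlib

section
/- Let Γ₁ be a real (N−1)×N matrix, Γ₂ a real 1×N matrix, A₁,…,A_{d−1} real symmetric N×N matrices, and A_d real invertible. Define M(γ,τ,η) as the N×N matrix with first N−1 rows Γ₁ and last row Γ₂ A_d⁻¹((γ+iτ)I + Σ iη_j A_j). Then det M(γ,τ,η) ≠ 0 for all γ > 0, τ ∈ ℝ, η ∈ ℝ^{d−1} if and only if the real matrix M̃ (first N−1 rows Γ₁, last row Γ₂A_d⁻¹) is invertible. -/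
open Complex Matrix

lemma det_map_ofReal {k : Type*} [Fintype k] [DecidableEq k] (M : Matrix k k ℝ) :
    (M.map Complex.ofReal).det = (M.det : ℂ) := by
  rw [show M.map Complex.ofReal = Complex.ofRealHom.mapMatrix M from rfl, ← RingHom.map_det]
  rfl

lemma key_det {n m : ℕ}
    (Γ₁ : Matrix (Fin n) (Fin n ⊕ Fin 1) ℝ)
    (B : Matrix (Fin 1) (Fin n ⊕ Fin 1) ℝ)
    (C : Fin m → Matrix (Fin n ⊕ Fin 1) (Fin n ⊕ Fin 1) ℝ)
    (γ τ : ℝ) (η : Fin m → ℝ) :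
    (Matrix.fromRows (Γ₁.map (Complex.ofReal))
        ((B.map (Complex.ofReal)) *
          (((γ : ℂ) + τ * Complex.I) • (1 : Matrix (Fin n ⊕ Fin 1) (Fin n ⊕ Fin 1) ℂ) +
            ∑ j, (Complex.I * (η j : ℂ)) • ((C j).map (Complex.ofReal))))).det =
      (γ : ℂ) * ((Matrix.fromRows Γ₁ B).det : ℝ) +
        Complex.I * ((Matrix.fromRows Γ₁ (τ • B + ∑ j, η j • (B * C j))).det : ℝ) := by
  set Bc := B.map Complex.ofReal with hBc
  set Γc := Γ₁.map Complex.ofReal with hΓc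
  have hW : Bc * (((γ : ℂ) + τ * Complex.I) • (1 : Matrix (Fin n ⊕ Fin 1) (Fin n ⊕ Fin 1) ℂ) +
        ∑ j, (Complex.I * (η j : ℂ)) • ((C j).map Complex.ofReal)) =
      (γ : ℂ) • Bc + Complex.I • ((τ : ℂ) • Bc +
        ∑ j, (η j : ℂ) • (Bc * (C j).map Complex.ofReal)) := by
    rw [Matrix.mul_add, Matrix.mul_smul, Matrix.mul_one, Matrix.mul_sum]
    simp_rw [Matrix.mul_smul]
    rw [smul_add, Finset.smul_sum, add_smul, add_assoc]
    congr 1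
    congr 1
    · rw [smul_smul, mul_comm]
    · exact Finset.sum_congr rfl fun j _ => by rw [smul_smul]
  rw [hW]
  set q : (Fin n ⊕ Fin 1) → ℂ := ((τ : ℂ) • Bc + ∑ j, (η j : ℂ) • (Bc * (C j).map Complex.ofReal)) 0 with hq
  have e1 : Matrix.fromRows Γc ((γ : ℂ) • Bc + Complex.I • ((τ : ℂ) • Bc +
        ∑ j, (η j : ℂ) • (Bc * (C j).map Complex.ofReal))) =
      (Matrix.fromRows Γc Bc).updateRow (Sum.inr 0)
        ((γ : ℂ) • (Matrix.fromRows Γc Bc) (Sum.inr 0) + Complex.I • q) := by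
    ext x k
    cases x with
    | inl a => simp [Matrix.updateRow_apply]
    | inr b =>
      have : b = 0 := Subsingleton.elim _ _
      subst this
      simp [Matrix.updateRow_apply, hq, mul_add]
  rw [e1, Matrix.det_updateRow_add, Matrix.det_updateRow_smul, Matrix.det_updateRow_smul,
    Matrix.updateRow_eq_self]
  have e2 : (Matrix.fromRows Γc Bc).updateRow (Sum.inr 0) q =
      (Matrix.fromRows Γ₁ (τ • B + ∑ j, η j • (B * C j))).map Complex.ofReal := by
    ext x k
    cases x with
    | inl a => simp [Matrix.updateRow_apply, hΓc]
    | inr b =>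
      have : b = 0 := Subsingleton.elim _ _
      subst this
      simp [Matrix.updateRow_apply, hq, hBc, Matrix.add_apply, Matrix.smul_apply,
        Matrix.sum_apply, Matrix.mul_apply, Matrix.map_apply, Complex.real_smul]
      exact Finset.sum_congr rfl fun x _ => by ring
  rw [e2]
  have e3 : Matrix.fromRows Γc Bc = (Matrix.fromRows Γ₁ B).map Complex.ofReal := by
    ext x k
    cases x <;> simp [hBc, hΓc, Matrix.map_apply]
  rw [e3, det_map_ofReal, det_map_ofReal]

/-- Weak Lopatinski condition in the totally incoming case with a single Neumann
condition: the matrix `M(γ,τ,η)` (first `N−1` rows `Γ₁`, last row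
`Γ₂ A_d⁻¹((γ+iτ)I + Σⱼ iηⱼ Aⱼ)`) has nonvanishing determinant for all `γ > 0`,
`τ ∈ ℝ`, `η ∈ ℝ^{d−1}` iff the real matrix `M̃` (first `N−1` rows `Γ₁`, last row
`Γ₂ A_d⁻¹`) is invertible.  (Here `N = n+1`, with `ℝᴺ` indexed by `Fin n ⊕ Fin 1`.) -/
theorem weak_lopatinski_iff_invertible {n m : ℕ}
    (Γ₁ : Matrix (Fin n) (Fin n ⊕ Fin 1) ℝ)
    (Γ₂ : Matrix (Fin 1) (Fin n ⊕ Fin 1) ℝ)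
    (A : Fin m → Matrix (Fin n ⊕ Fin 1) (Fin n ⊕ Fin 1) ℝ)
    (hA : ∀ j, (A j).IsSymm)
    (Ad : Matrix (Fin n ⊕ Fin 1) (Fin n ⊕ Fin 1) ℝ) (hAd : IsUnit Ad) :
    (∀ (γ τ : ℝ) (η : Fin m → ℝ), 0 < γ →
      (Matrix.fromRows (Γ₁.map (Complex.ofReal))
        ((Γ₂.map (Complex.ofReal)) * ((Ad⁻¹).map (Complex.ofReal)) *
          (((γ : ℂ) + τ * Complex.I) • (1 : Matrix (Fin n ⊕ Fin 1) (Fin n ⊕ Fin 1) ℂ) +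
            ∑ j, (Complex.I * (η j : ℂ)) • ((A j).map (Complex.ofReal))))).det ≠ 0)
      ↔ IsUnit (Matrix.fromRows Γ₁ (Γ₂ * Ad⁻¹)) := by
  have hmap : Γ₂.map Complex.ofReal * (Ad⁻¹).map Complex.ofReal =
      (Γ₂ * Ad⁻¹).map Complex.ofReal := by
    ext i k
    simp [Matrix.mul_apply, Matrix.map_apply]
  have hkey : ∀ (γ τ : ℝ) (η : Fin m → ℝ),
      (Matrix.fromRows (Γ₁.map (Complex.ofReal))
        ((Γ₂.map (Complex.ofReal)) * ((Ad⁻¹).map (Complex.ofReal)) *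
          (((γ : ℂ) + τ * Complex.I) • (1 : Matrix (Fin n ⊕ Fin 1) (Fin n ⊕ Fin 1) ℂ) +
            ∑ j, (Complex.I * (η j : ℂ)) • ((A j).map (Complex.ofReal))))).det =
      (γ : ℂ) * ((Matrix.fromRows Γ₁ (Γ₂ * Ad⁻¹)).det : ℝ) +
        Complex.I * ((Matrix.fromRows Γ₁
          (τ • (Γ₂ * Ad⁻¹) + ∑ j, η j • ((Γ₂ * Ad⁻¹) * A j))).det : ℝ) := by
    intro γ τ η
    rw [hmap]
    exact key_det Γ₁ (Γ₂ * Ad⁻¹) A γ τ η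
  rw [Matrix.isUnit_iff_isUnit_det, isUnit_iff_ne_zero]
  constructor
  · intro h
    have h1 := h 1 0 0 one_pos
    rw [hkey 1 0 0] at h1
    have hQ : (Matrix.fromRows Γ₁
        ((0 : ℝ) • (Γ₂ * Ad⁻¹) + ∑ j : Fin m, (0 : Fin m → ℝ) j • ((Γ₂ * Ad⁻¹) * A j))).det = 0 := by
      apply Matrix.det_eq_zero_of_row_eq_zero (Sum.inr 0)
      intro k
      simp
    rw [hQ] at h1
    simp only [ofReal_zero, mul_zero, add_zero, ofReal_one, one_mul] at h1
    exact_mod_cast h1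
  · intro hP γ τ η hγ
    rw [hkey γ τ η]
    intro hc
    have := congrArg Complex.re hc
    simp [Complex.add_re, Complex.mul_re] at this
    rcases this with h | h
    · exact hγ.ne' h
    · exact hP h
end

section
/- Let a, b ∈ ℝ, z ∈ ℂ and w ∈ ℂ. Then the determinant of the 3×3 complex matrix [[−1, −1, −b],[w, z+w, 0],[a·w, 0, z]] equals −(z² − ab·wz − ab·w²). Moreover, for a = 1 and b = −1 there exist γ > 0, τ ∈ ℝ, and η ∈ ℝ (namely γ = √3, τ = −1, η = 2, z = γ + iτ, w = iη) such that this matrix is singular. -/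
open Complex

/-- Determinant computation for the totally incoming example with mixed
Dirichlet–Neumann boundary conditions, and failure of the weak Lopatinski
condition at a frequency with `γ > 0` when `a = 1`, `b = −1`. -/
theorem totally_incoming_weak_lopatinski_failure :
    (∀ (a b : ℝ) (z w : ℂ),
      (!![(-1 : ℂ), -1, -(b : ℂ);
          w, z + w, 0;
          (a : ℂ) * w, 0, z]).det
        = -(z ^ 2 - (a : ℂ) * (b : ℂ) * w * z - (a : ℂ) * (b : ℂ) * w ^ 2)) ∧
    (∃ (γ τ η : ℝ), 0 < γ ∧ γ = Real.sqrt 3 ∧ τ = -1 ∧ η = 2 ∧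
      (!![(-1 : ℂ), -1, -(((-1 : ℝ)) : ℂ);
          (η : ℂ) * Complex.I, ((γ : ℂ) + τ * Complex.I) + (η : ℂ) * Complex.I, 0;
          ((1 : ℝ) : ℂ) * ((η : ℂ) * Complex.I), 0, (γ : ℂ) + τ * Complex.I]).det = 0) := by
  have hdet : ∀ (a b : ℝ) (z w : ℂ),
      (!![(-1 : ℂ), -1, -(b : ℂ);
          w, z + w, 0;
          (a : ℂ) * w, 0, z]).det
        = -(z ^ 2 - (a : ℂ) * (b : ℂ) * w * z - (a : ℂ) * (b : ℂ) * w ^ 2) := by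
    intro a b z w
    simp [Matrix.det_fin_three]
    ring
  refine ⟨hdet, Real.sqrt 3, -1, 2, Real.sqrt_pos.mpr (by norm_num), rfl, rfl, rfl, ?_⟩
  rw [hdet 1 (-1) (((Real.sqrt 3 : ℝ) : ℂ) + ((-1 : ℝ) : ℂ) * Complex.I)
      (((2 : ℝ) : ℂ) * Complex.I)]
  have h3 : ((Real.sqrt 3 : ℝ) : ℂ) ^ 2 = 3 := by
    norm_cast
    exact Real.sq_sqrt (by norm_num)
  have hI : Complex.I ^ 2 = -1 := Complex.I_sq
  push_cast
  linear_combination -h3 - 3 * hI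
end

section
/- Let A₁,…,A_{d−1} be real symmetric N×N matrices, A_d a real invertible N×N matrix, γ > 0, τ ∈ ℝ, η ∈ ℝ^{d−1}. Then the 2N×2N complex matrix G = [[0, I],[(γ+iτ)I + Σ_{j<d} iη_j A_j + |η|² I, A_d]] (written in N×N blocks) has no purely imaginary eigenvalue. -/
open Complex Finset Matrix

lemma symm_sum_conj {N : ℕ} (M : Matrix (Fin N) (Fin N) ℝ) (hM : M.IsSymm)
    (v : Fin N → ℂ) :
    (starRingEnd ℂ) (∑ a, ((M.map Complex.ofReal) *ᵥ v) a * (starRingEnd ℂ) (v a))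
      = ∑ a, ((M.map Complex.ofReal) *ᵥ v) a * (starRingEnd ℂ) (v a) := by
  simp only [Matrix.mulVec, dotProduct, Matrix.map_apply, map_sum, Finset.sum_mul]
  rw [Finset.sum_comm]
  refine Finset.sum_congr rfl fun a _ => Finset.sum_congr rfl fun b _ => ?_
  rw [hM.apply b a]
  simp only [_root_.map_mul, Complex.conj_ofReal, RingHomCompTriple.comp_apply, RingHom.id_apply,
    Complex.conj_conj]
  ring

lemma sum_mulVec_eq {m N : ℕ} (M : Fin m → Matrix (Fin N) (Fin N) ℂ) (v : Fin N → ℂ) :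
    (∑ j, M j) *ᵥ v = ∑ j, (M j) *ᵥ v := by
  funext a
  simp only [Matrix.mulVec, dotProduct, Finset.sum_apply, Matrix.sum_apply,
    Finset.sum_mul]
  rw [Finset.sum_comm]

/-- The first-order symbol `G = [[0, I],[(γ+iτ)I + Σⱼ iηⱼAⱼ + |η|²I, A_d]]` of the
parabolic problem has no purely imaginary eigenvalue when `γ > 0`, the `Aⱼ` are
real symmetric and `A_d` is real symmetric (invertible). -/
theorem evans_symbol_no_imaginary_eigenvalue {N m : ℕ}
    (A : Fin m → Matrix (Fin N) (Fin N) ℝ) (hA : ∀ j, (A j).IsSymm)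
    (Ad : Matrix (Fin N) (Fin N) ℝ) (hAd : Ad.IsSymm) (hinv : IsUnit Ad)
    (γ τ : ℝ) (hγ : 0 < γ) (η : Fin m → ℝ) :
    ∀ ξ : ℝ,
      ¬ Module.End.HasEigenvalue
        (Matrix.toLin'
          (Matrix.fromBlocks
            (0 : Matrix (Fin N) (Fin N) ℂ) (1 : Matrix (Fin N) (Fin N) ℂ)
            (((γ : ℂ) + τ * Complex.I) • (1 : Matrix (Fin N) (Fin N) ℂ) +
              (∑ j, (Complex.I * (η j : ℂ)) • ((A j).map (Complex.ofReal))) +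
              ((∑ j, (η j) ^ 2 : ℝ) : ℂ) • (1 : Matrix (Fin N) (Fin N) ℂ))
            (Ad.map (Complex.ofReal))))
        ((ξ : ℂ) * Complex.I) := by
  intro ξ h
  obtain ⟨x, hx⟩ := h.exists_hasEigenvector
  set μ : ℂ := (ξ : ℂ) * Complex.I with hμ
  have hxa : Matrix.toLin' _ x = μ • x := hx.apply_eq_smul
  rw [Matrix.toLin'_apply] at hxa
  set v : Fin N → ℂ := fun a => x (Sum.inl a) with hv
  set w : Fin N → ℂ := fun a => x (Sum.inr a) with hw
  have hxe : x = Sum.elim v w := by funext s; cases s <;> rfl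
  rw [hxe, Matrix.fromBlocks_mulVec] at hxa
  have eq1 : ∀ a, w a = μ * v a := by
    intro a
    have := congrFun hxa (Sum.inl a)
    simpa using this
  have eq2 : ∀ a, ((((γ : ℂ) + τ * Complex.I) • (1 : Matrix (Fin N) (Fin N) ℂ) +
              (∑ j, (Complex.I * (η j : ℂ)) • ((A j).map (Complex.ofReal))) +
              ((∑ j, (η j) ^ 2 : ℝ) : ℂ) • (1 : Matrix (Fin N) (Fin N) ℂ)) *ᵥ v) a
           + ((Ad.map Complex.ofReal) *ᵥ w) a = μ * w a := by
    intro a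
    have := congrFun hxa (Sum.inr a)
    simpa using this
  -- substitute w = μ v
  have eq2' : ∀ a, ((γ : ℂ) + τ * Complex.I) * v a
      + (∑ j, (Complex.I * (η j : ℂ)) * (((A j).map Complex.ofReal) *ᵥ v) a)
      + ((∑ j, (η j) ^ 2 : ℝ) : ℂ) * v a
      + μ * (((Ad.map Complex.ofReal) *ᵥ v) a) = μ ^ 2 * v a := by
    intro a
    have h2 := eq2 a
    have hww : w = μ • v := by funext a; simpa using eq1 a
    rw [hww] at h2
    simp only [Matrix.add_mulVec, Matrix.smul_mulVec, Matrix.one_mulVec,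
      Matrix.mulVec_smul, Pi.add_apply, Pi.smul_apply, smul_eq_mul] at h2
    rw [sum_mulVec_eq] at h2
    simp only [Finset.sum_apply, Matrix.smul_mulVec, Pi.smul_apply, smul_eq_mul] at h2
    rw [sq, mul_assoc μ μ (v a)]; exact h2
  set Q : ℝ := ∑ a, Complex.normSq (v a) with hQdef
  have hQ : ∑ a, v a * (starRingEnd ℂ) (v a) = (Q : ℂ) := by
    push_cast [hQdef]
    exact Finset.sum_congr rfl fun a _ => Complex.mul_conj _
  set Hj : Fin m → ℂ := fun j => ∑ a, (((A j).map Complex.ofReal) *ᵥ v) a * (starRingEnd ℂ) (v a)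
    with hHj
  set Hd : ℂ := ∑ a, ((Ad.map Complex.ofReal) *ᵥ v) a * (starRingEnd ℂ) (v a) with hHd
  have himj : ∀ j, (Hj j).im = 0 := fun j =>
    Complex.conj_eq_iff_im.mp (symm_sum_conj (A j) (hA j) v)
  have himd : Hd.im = 0 := Complex.conj_eq_iff_im.mp (symm_sum_conj Ad hAd v)
  have main : μ ^ 2 * (Q : ℂ) = ((γ : ℂ) + τ * Complex.I) * Q
      + (∑ j, (Complex.I * (η j : ℂ)) * Hj j)
      + ((∑ j, (η j) ^ 2 : ℝ) : ℂ) * Q + μ * Hd := by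
    calc μ ^ 2 * (Q : ℂ) = ∑ a, μ ^ 2 * v a * (starRingEnd ℂ) (v a) := by
          rw [← hQ, Finset.mul_sum]; simp [mul_assoc]
      _ = ∑ a, (((γ : ℂ) + τ * Complex.I) * v a
          + (∑ j, (Complex.I * (η j : ℂ)) * (((A j).map Complex.ofReal) *ᵥ v) a)
          + ((∑ j, (η j) ^ 2 : ℝ) : ℂ) * v a
          + μ * (((Ad.map Complex.ofReal) *ᵥ v) a)) * (starRingEnd ℂ) (v a) := by
          refine Finset.sum_congr rfl fun a _ => ?_
          rw [eq2' a]
      _ = _ := by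
          rw [← hQ, hHd, Finset.mul_sum, Finset.mul_sum, Finset.mul_sum,
            show (∑ j, (Complex.I * (η j : ℂ)) * Hj j)
              = ∑ a, ∑ j, (Complex.I * (η j : ℂ)) *
                ((((A j).map Complex.ofReal) *ᵥ v) a * (starRingEnd ℂ) (v a)) by
              rw [Finset.sum_comm]
              exact Finset.sum_congr rfl fun j _ => by
                rw [hHj]; exact Finset.mul_sum _ _ _]
          simp only [← Finset.sum_add_distrib]
          refine Finset.sum_congr rfl fun a _ => ?_
          rw [add_mul, add_mul, add_mul, Finset.sum_mul]
          simp only [mul_assoc]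
  have hre := congrArg Complex.re main
  simp only [hμ, pow_two, Complex.add_re, Complex.mul_re, Complex.re_sum, Complex.ofReal_re,
    Complex.ofReal_im, Complex.I_re, Complex.I_im, Complex.add_im, Complex.mul_im,
    himj, himd, mul_zero, zero_mul, sub_zero, add_zero, zero_add, mul_one, one_mul,
    zero_sub, neg_mul, Finset.sum_const_zero] at hre
  have hs : (0:ℝ) ≤ ∑ j, η j * η j := Finset.sum_nonneg fun j _ => mul_self_nonneg _
  have hQnn : (0:ℝ) ≤ Q := Finset.sum_nonneg fun a _ => Complex.normSq_nonneg _
  have hQ0 : Q = 0 := le_antisymm (by nlinarith [mul_self_nonneg ξ]) hQnn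
  have hv0 : ∀ a, v a = 0 := by
    intro a
    have := (Finset.sum_eq_zero_iff_of_nonneg
      (fun a _ => Complex.normSq_nonneg (v a))).mp hQ0 a (Finset.mem_univ a)
    exact Complex.normSq_eq_zero.mp this
  exact hx.2 (by
    rw [hxe]
    funext s
    cases s with
    | inl a => simp [hv0 a]
    | inr a => simp [eq1 a, hv0 a])
end
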